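/- Let (X,d) be a metric space, Z a nonempty set, and 𝒜 ⊆ X × Z a nonempty set preordered by a reflexive transitive relation ≼. Then the following are equivalent: (a) for every ≼-decreasing sequence ((x_n,z_n))_{n≥1} ⊆ 𝒜 the sequence (x_n) is Cauchy; (b) for every ≼-decreasing sequence ((x_n,z_n))_{n≥1} ⊆ 𝒜 the sequence (x_n) is asymptotic, that is, d(x_n,x_{n+1}) → 0. -/

import Mathlib

/-!
Cauchy sequences are asymptotic, since `(n, n + 1) → ∞`. Conversely, if `(x_n)` is not Cauchy,
there are `ε > 0` and, for every `N`, some `n > N` with `ε ≤ d(x_N, x_n)`; iterating `N ↦ n`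
yields a subsequence whose consecutive terms are `ε` apart. By transitivity a subsequence of a
`≼`-decreasing sequence is again `≼`-decreasing, so it contradicts asymptoticity.
-/

open Filter Topology

section PseudoMetric

variable {α : Type*} [PseudoMetricSpace α] {f : ℕ → α}

theorem CauchySeq.tendsto_dist_succ (hf : CauchySeq f) :
    Tendsto (fun n => dist (f n) (f (n + 1))) atTop (𝓝 0) :=
  (cauchySeq_iff_tendsto_dist_atTop_0.mp hf).comp <| by
    rw [← prod_atTop_atTop_eq]
    exact tendsto_id.prodMk (tendsto_add_atTop_nat 1)

theorem exists_lt_le_dist_of_not_cauchySeq (hf : ¬CauchySeq f) :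
    ∃ ε > 0, ∀ N, ∃ n > N, ε ≤ dist (f N) (f n) := by
  simp only [Metric.cauchySeq_iff', not_forall, not_exists, not_lt] at hf
  obtain ⟨ε, hε, hN⟩ := hf
  refine ⟨ε, hε, fun N => ?_⟩
  obtain ⟨n, hNn, hdist⟩ := hN N
  refine ⟨n, hNn.lt_of_ne ?_, dist_comm (f n) (f N) ▸ hdist⟩
  rintro rfl
  exact (dist_self (f N) ▸ hdist).not_gt hε

theorem exists_strictMono_le_dist_succ_of_not_cauchySeq (hf : ¬CauchySeq f) :
    ∃ ε > 0, ∃ φ : ℕ → ℕ, StrictMono φ ∧ ∀ k, ε ≤ dist (f (φ k)) (f (φ (k + 1))) := by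
  obtain ⟨ε, hε, hnext⟩ := exists_lt_le_dist_of_not_cauchySeq hf
  choose next hlt hdist using hnext
  refine ⟨ε, hε, fun k => next^[k] 0, strictMono_nat_of_lt_succ fun k => ?_, fun k => ?_⟩ <;>
    simp only [Function.iterate_succ_apply']
  exacts [hlt _, hdist _]

theorem cauchySeq_of_forall_strictMono_tendsto_dist_succ
    (hf : ∀ φ : ℕ → ℕ, StrictMono φ →
      Tendsto (fun k => dist (f (φ k)) (f (φ (k + 1)))) atTop (𝓝 0)) :
    CauchySeq f := by
  by_contra hcauchy
  obtain ⟨ε, hε, φ, hφ, hdist⟩ := exists_strictMono_le_dist_succ_of_not_cauchySeq hcauchy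
  obtain ⟨k, hk⟩ := ((hf φ hφ).eventually (gt_mem_nhds hε)).exists
  exact (hdist k).not_gt hk

end PseudoMetric

theorem rel_of_lt_of_forall_rel_succ {β : Type*} {A : Set β} {r : β → β → Prop}
    (htrans : ∀ p ∈ A, ∀ q ∈ A, ∀ s ∈ A, r p q → r q s → r p s)
    {u : ℕ → β} (hu : ∀ n, u n ∈ A) (hr : ∀ n, r (u (n + 1)) (u n))
    {m n : ℕ} (hmn : m < n) : r (u n) (u m) := by
  induction n, hmn using Nat.le_induction with
  | base => exact hr m
  | succ n _ ih => exact htrans _ (hu _) _ (hu _) _ (hu _) (hr n) ih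

theorem statement10_general {X Z : Type*} [MetricSpace X]
    (A : Set (X × Z))
    (r : X × Z → X × Z → Prop)
    (htrans : ∀ p ∈ A, ∀ q ∈ A, ∀ s ∈ A, r p q → r q s → r p s) :
    (∀ u : ℕ → X × Z, (∀ n, u n ∈ A) → (∀ n, r (u (n + 1)) (u n)) →
        CauchySeq (fun n => (u n).1)) ↔
      (∀ u : ℕ → X × Z, (∀ n, u n ∈ A) → (∀ n, r (u (n + 1)) (u n)) →
        Filter.Tendsto (fun n => dist (u n).1 (u (n + 1)).1) Filter.atTop (nhds 0)) := by
  refine ⟨fun h u hu hr => (h u hu hr).tendsto_dist_succ, fun h u hu hr => ?_⟩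
  refine cauchySeq_of_forall_strictMono_tendsto_dist_succ fun φ hφ => ?_
  exact h (u ∘ φ) (fun k => hu _) fun k =>
    rel_of_lt_of_forall_rel_succ htrans hu hr (hφ k.lt_succ_self)

/-- Condition (Ca) holds iff every decreasing sequence has asymptotic first
components. -/
theorem statement10 {X Z : Type*} [MetricSpace X] [Nonempty Z]
    (A : Set (X × Z)) (hA : A.Nonempty)
    (r : X × Z → X × Z → Prop)
    (hrefl : ∀ p ∈ A, r p p)
    (htrans : ∀ p ∈ A, ∀ q ∈ A, ∀ s ∈ A, r p q → r q s → r p s) :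
    (∀ u : ℕ → X × Z, (∀ n, u n ∈ A) → (∀ n, r (u (n + 1)) (u n)) →
        CauchySeq (fun n => (u n).1)) ↔
      (∀ u : ℕ → X × Z, (∀ n, u n ∈ A) → (∀ n, r (u (n + 1)) (u n)) →
        Filter.Tendsto (fun n => dist (u n).1 (u (n + 1)).1) Filter.atTop (nhds 0)) :=
  statement10_general A r htrans
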